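/- For every convex function f : ℝ → ℝ and every test function φ ∈ C²_c(ℝ), ∫_ℝ φ''(x) f(x) dx = ∫_ℝ φ(x) μ(dx), where μ is the measure defined by μ[a, b) = f'_−(b) − f'_−(a). -/

import Mathlib

/-!
Both sides equal `-∫ φ' f'_-`. On the left this is integration by parts: `f` is differentiable,
with derivative `f'_-`, off the countable set of discontinuities of the monotone function `f'_-`,
and the fundamental theorem of calculus tolerates a countable exceptional set. On the right,
write `φ t = -∫_{x > t} φ'(x) dx` and swap the integrals: on a window `[a, b)` containing the
support of `φ`, the inner `μ`-integral is `μ[a, x) = f'_-(x) - f'_-(a)`. If `μ[a, b) = ∞`, the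
hypothesis on `μ` only says `f'_-(b) = f'_-(a)` (as `ENNReal.toReal ∞ = 0`): then `f'_-` is
constant on the window and every subinterval has `μ`-mass `0` or `∞`, so both sides vanish.
-/

open MeasureTheory

noncomputable def leftDeriv (f : ℝ → ℝ) (x : ℝ) : ℝ := derivWithin f (Set.Iio x) x

open Set Topology

theorem HasCompactSupport.exists_pos_tsupport_subset_Ioo {φ : ℝ → ℝ} (hφ : HasCompactSupport φ) :
    ∃ R, 0 < R ∧ tsupport φ ⊆ Ioo (-R) R := by
  obtain ⟨R, hR⟩ := hφ.isCompact.isBounded.subset_ball 0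
  refine ⟨|R| + 1, by positivity, ?_⟩
  rw [← Real.ball_zero_eq_Ioo]
  exact hR.trans (Metric.ball_subset_ball (by linarith [le_abs_self R]))

theorem integral_deriv_mul_eq_neg_integral_mul_of_hasDerivAt_off_countable
    {u v v' : ℝ → ℝ} {s : Set ℝ} (hu : ContDiff ℝ 1 u) (hsupp : HasCompactSupport u)
    (hv : Continuous v) (hs : s.Countable) (hderiv : ∀ x ∉ s, HasDerivAt v (v' x) x)
    (hv' : ∀ a b, IntervalIntegrable v' volume a b) :
    ∫ x, deriv u x * v x = -∫ x, u x * v' x := by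
  obtain ⟨R, -, hR⟩ := hsupp.exists_pos_tsupport_subset_Ioo
  have hu0 : ∀ x ∉ Ioo (-R) R, u x = 0 := fun x hx =>
    image_eq_zero_of_notMem_tsupport fun h => hx (hR h)
  have hu'0 : ∀ x ∉ Ioo (-R) R, deriv u x = 0 := fun x hx =>
    image_eq_zero_of_notMem_tsupport fun h => hx (hR (tsupport_deriv_subset h))
  have hlocal : ∀ w : ℝ → ℝ, (∀ x ∉ Ioo (-R) R, w x = 0) → ∫ x in -R..R, w x = ∫ x, w x :=
    fun w hw => intervalIntegral.integral_eq_integral_of_support_subset fun x hx =>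
      Ioo_subset_Ioc_self (by_contra fun h => hx (hw x h))
  have hint₁ : IntervalIntegrable (fun x => deriv u x * v x) volume (-R) R :=
    ((hu.continuous_deriv le_rfl).mul hv).intervalIntegrable _ _
  have hint₂ : IntervalIntegrable (fun x => u x * v' x) volume (-R) R :=
    (hv' _ _).continuousOn_mul hu.continuous.continuousOn
  have hftc : ∫ x in -R..R, (deriv u x * v x + u x * v' x) = 0 := by
    rw [integral_eq_of_hasDerivAt_off_countable (fun x => u x * v x) _ hs
      (hu.continuous.mul hv).continuousOn
      (fun x hx => (hu.differentiable one_ne_zero x).hasDerivAt.mul (hderiv x hx.2))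
      (hint₁.add hint₂), hu0 R (by simp), hu0 (-R) (by simp)]
    ring
  rw [intervalIntegral.integral_add hint₁ hint₂, hlocal _ fun x hx => by simp [hu'0 x hx],
    hlocal _ fun x hx => by simp [hu0 x hx]] at hftc
  linarith

namespace ConvexOn

variable {f : ℝ → ℝ} (hf : ConvexOn ℝ univ f)
include hf

theorem monotone_leftDeriv : Monotone (leftDeriv f) := fun _ _ hxy =>
  hf.monotoneOn_leftDeriv (by simp) (by simp) hxy

theorem hasDerivAt_leftDeriv_of_continuousAt {x : ℝ} (hx : ContinuousAt (leftDeriv f) x) :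
    HasDerivAt f (leftDeriv f x) x := by
  have hleft : HasDerivWithinAt f (leftDeriv f x) (Iio x) x :=
    hf.hasDerivWithinAt_leftDeriv_of_mem_interior (by simp)
  have hright := hf.hasDerivWithinAt_rightDeriv_of_mem_interior (x := x) (by simp)
  have hright_eq : derivWithin f (Ioi x) x = leftDeriv f x := by
    refine le_antisymm ?_ (hf.leftDeriv_le_rightDeriv_of_mem_interior (by simp))
    refine ge_of_tendsto (hx.tendsto.mono_left (nhdsWithin_le_nhds (s := Ioi x))) ?_
    filter_upwards [self_mem_nhdsWithin] with y (hy : x < y)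
    exact (hf.rightDeriv_le_slope (mem_univ x) (mem_univ y) hy
      (hf.differentiableWithinAt_Ioi_of_mem_interior (by simp))).trans
      (hf.slope_le_leftDeriv_of_mem_interior (mem_univ x) (by simp) hy)
  rw [hright_eq, hasDerivWithinAt_Ioi_iff_Ici] at hright
  simpa [Iio_union_Ici] using hleft.union hright

theorem integral_deriv_mul_eq_neg_integral_mul_leftDeriv {u : ℝ → ℝ} (hu : ContDiff ℝ 1 u)
    (hsupp : HasCompactSupport u) :
    ∫ x, deriv u x * f x = -∫ x, u x * leftDeriv f x :=
  integral_deriv_mul_eq_neg_integral_mul_of_hasDerivAt_off_countable hu hsupp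
    (continuousOn_univ.mp (hf.continuousOn isOpen_univ))
    hf.monotone_leftDeriv.countable_not_continuousAt
    (fun _ hx => hf.hasDerivAt_leftDeriv_of_continuousAt (not_not.mp hx))
    (fun _ _ => hf.monotone_leftDeriv.intervalIntegrable)

end ConvexOn

theorem integral_setIntegral_Ioi_eq_integral_measureReal_Iio_mul {ν : Measure ℝ}
    [IsFiniteMeasure ν] {ψ : ℝ → ℝ} (hψ : Integrable ψ) :
    ∫ t, (∫ x in Ioi t, ψ x) ∂ν = ∫ x, ν.real (Iio x) * ψ x := by
  have hF : Integrable (Function.uncurry fun t x => (Ioi t).indicator ψ x) (ν.prod volume) := by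
    have : (Function.uncurry fun t x => (Ioi t).indicator ψ x) =
        {p : ℝ × ℝ | p.1 < p.2}.indicator (fun p => ψ p.2) := by
      ext ⟨t, x⟩
      simp [indicator_apply]
    rw [this]
    exact (hψ.comp_snd ν).indicator (measurableSet_lt measurable_fst measurable_snd)
  simp_rw [← integral_indicator measurableSet_Ioi]
  rw [integral_integral_swap hF]
  congr 1 with x
  have : (fun t => (Ioi t).indicator ψ x) = (Iio x).indicator fun _ => ψ x := by
    ext t
    simp [indicator_apply]
  rw [this, integral_indicator_const _ measurableSet_Iio, smul_eq_mul]

theorem integral_eq_zero_of_forall_measureReal_Ico_eq_zero {ν : Measure ℝ} {φ : ℝ → ℝ}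
    (hφ : Continuous φ) (hν : ∀ a b, ν.real (Ico a b) = 0) : ∫ x, φ x ∂ν = 0 := by
  by_cases hint : Integrable φ ν
  swap
  · exact integral_undef hint
  refine integral_eq_zero_of_ae (ae_iff.mpr (measure_null_of_locally_null _ fun x hx => ?_))
  have hε : 0 < ‖φ x‖ / 2 := by simpa using hx
  have hU : {y | ‖φ x‖ / 2 < ‖φ y‖} ∈ 𝓝 x :=
    (isOpen_lt continuous_const hφ.norm).mem_nhds (by simpa using hx)
  obtain ⟨a, b, ⟨hax, hxb⟩, hab⟩ := mem_nhds_iff_exists_Ioo_subset.mp hU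
  obtain ⟨a', haa', ha'x⟩ := exists_between hax
  have hsub : Ico a' b ⊆ {y | ‖φ x‖ / 2 ≤ ‖φ y‖} := fun y hy =>
    le_of_lt (show ‖φ x‖ / 2 < ‖φ y‖ from hab ⟨haa'.trans_le hy.1, hy.2⟩)
  have hfin : ν (Ico a' b) ≠ ⊤ :=
    ((measure_mono hsub).trans_lt (hint.measure_norm_ge_lt_top hε)).ne
  refine ⟨Ico a' b, mem_nhdsWithin_of_mem_nhds (Ico_mem_nhds ha'x hxb), ?_⟩
  exact ((ENNReal.toReal_eq_zero_iff _).mp (hν a' b)).resolve_right hfin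

section StieltjesMeasure

variable {μ : Measure ℝ} {g : ℝ → ℝ} (hg : Monotone g)
  (hμ : ∀ a b, a ≤ b → μ.real (Ico a b) = g b - g a) {φ : ℝ → ℝ} (hφ : ContDiff ℝ 1 φ)
include hg hμ hφ

theorem integral_restrict_Ico_eq_neg_integral_sub_mul_deriv {a b : ℝ} (hab : a ≤ b)
    (hsupp : HasCompactSupport φ) (hφab : tsupport φ ⊆ Ioo a b) :
    ∫ x, φ x ∂μ.restrict (Ico a b) = -∫ x, (g x - g a) * deriv φ x := by
  have hφ'0 : ∀ x ∉ Ioo a b, deriv φ x = 0 := fun x hx =>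
    image_eq_zero_of_notMem_tsupport fun h => hx (hφab (tsupport_deriv_subset h))
  by_cases htop : μ (Ico a b) = ⊤
  · have hconst : ∀ x ∈ Icc a b, g x = g a := by
      have hgb : g b = g a := by
        have := hμ a b hab
        rw [measureReal_def, htop, ENNReal.toReal_top] at this
        linarith
      exact fun x hx => le_antisymm (hgb ▸ hg hx.2) (hg hx.1)
    have hnull : ∀ c d, (μ.restrict (Ico a b)).real (Ico c d) = 0 := by
      intro c d
      rw [measureReal_restrict_apply measurableSet_Ico, Ico_inter_Ico]
      rcases le_or_gt (c ⊔ a) (d ⊓ b) with hcd | hcd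
      · rw [hμ _ _ hcd, hconst _ ⟨le_sup_right.trans hcd, inf_le_right⟩,
          hconst _ ⟨le_sup_right, hcd.trans inf_le_right⟩, sub_self]
      · simp [Ico_eq_empty_of_le hcd.le]
    have hzero : ∀ x, (g x - g a) * deriv φ x = 0 := fun x => by
      by_cases hx : x ∈ Ioo a b
      · rw [hconst x (Ioo_subset_Icc_self hx), sub_self, zero_mul]
      · rw [hφ'0 x hx, mul_zero]
    simp only [hzero, integral_zero, neg_zero]
    exact integral_eq_zero_of_forall_measureReal_Ico_eq_zero hφ.continuous hnull
  have : IsFiniteMeasure (μ.restrict (Ico a b)) := isFiniteMeasure_restrict.mpr htop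
  calc ∫ x, φ x ∂μ.restrict (Ico a b)
      = ∫ t, -(∫ x in Ioi t, deriv φ x) ∂μ.restrict (Ico a b) := by
        simp_rw [hsupp.integral_Ioi_deriv_eq hφ, neg_neg]
    _ = -∫ x, (μ.restrict (Ico a b)).real (Iio x) * deriv φ x := by
        rw [integral_neg, integral_setIntegral_Ioi_eq_integral_measureReal_Iio_mul
          ((hφ.continuous_deriv le_rfl).integrable_of_hasCompactSupport hsupp.deriv)]
    _ = -∫ x, (g x - g a) * deriv φ x := by
        congr 2 with x
        by_cases hx : x ∈ Ioo a b
        · rw [measureReal_restrict_apply measurableSet_Iio, inter_comm, Ico_inter_Iio,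
            min_eq_right hx.2.le, hμ _ _ hx.1.le]
        · rw [hφ'0 x hx, mul_zero, mul_zero]

theorem integral_eq_neg_integral_deriv_mul_of_measureReal_Ico (hsupp : HasCompactSupport φ) :
    ∫ x, φ x ∂μ = -∫ x, deriv φ x * g x := by
  obtain ⟨R, hR0, hR⟩ := hsupp.exists_pos_tsupport_subset_Ioo
  have hφ0 : ∀ x ∉ Ioo (-R) R, φ x = 0 := fun x hx =>
    image_eq_zero_of_notMem_tsupport fun h => hx (hR h)
  have hφ' : Continuous (deriv φ) := hφ.continuous_deriv le_rfl
  have hrestrict : ∫ x, φ x ∂μ = ∫ x, φ x ∂μ.restrict (Ico (-R) R) :=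
    (setIntegral_eq_integral_of_forall_compl_eq_zero fun x hx =>
      hφ0 x fun h => hx (Ioo_subset_Ico_self h)).symm
  have hint_deriv : ∫ x, deriv φ x = 0 := by
    rw [← setIntegral_eq_integral_of_forall_compl_eq_zero (s := Iic R) fun x hx =>
      image_eq_zero_of_notMem_tsupport fun h => hx (hR (tsupport_deriv_subset h)).2.le,
      hsupp.integral_Iic_deriv_eq hφ, hφ0 R (by simp)]
  have hint_mul : Integrable fun x => g x * deriv φ x :=
    (hg.locallyIntegrable (μ := volume)).integrable_smul_right_of_hasCompactSupport hφ' hsupp.deriv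
  rw [hrestrict, integral_restrict_Ico_eq_neg_integral_sub_mul_deriv hg hμ hφ (by linarith)
    hsupp hR]
  simp_rw [sub_mul]
  rw [integral_sub hint_mul ((hφ'.integrable_of_hasCompactSupport hsupp.deriv).const_mul _),
    integral_const_mul, hint_deriv, mul_zero, sub_zero]
  simp only [mul_comm]

end StieltjesMeasure

/-- for a convex f and φ ∈ C²_c(ℝ), ∫ φ'' f dx = ∫ φ dμ, where μ is the
Lebesgue–Stieltjes measure of the left derivative of f, i.e. μ[a,b) = f'_−(b) − f'_−(a). -/
theorem convex_second_derivative_measure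
    (f : ℝ → ℝ) (hf : ConvexOn ℝ Set.univ f)
    (μ : Measure ℝ)
    (hμ : ∀ a b : ℝ, a ≤ b → (μ (Set.Ico a b)).toReal = leftDeriv f b - leftDeriv f a)
    (φ : ℝ → ℝ) (hφ : ContDiff ℝ 2 φ) (hsupp : HasCompactSupport φ) :
    ∫ x, deriv (deriv φ) x * f x = ∫ x, φ x ∂μ := by
  rw [hf.integral_deriv_mul_eq_neg_integral_mul_leftDeriv (hφ.deriv' (n := 1)) hsupp.deriv,
    integral_eq_neg_integral_deriv_mul_of_measureReal_Ico hf.monotone_leftDeriv hμ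
      (hφ.of_le one_le_two) hsupp]
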